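/- The function z ↦ F'(z)/F(z) is negative and strictly increasing on (0,∞): for all 0 < z₁ < z₂ one has F'(z₁)/F(z₁) < F'(z₂)/F(z₂) < 0. -/

import Mathlib

open Real Set

noncomputable def F (z : ℝ) : ℝ :=
  Real.Gamma (z + 3/4) / (Real.Gamma (z + 1/4) * Real.sqrt z)

/-!
Write `ψ = Γ'/Γ`. Then `F'/F (z) = ψ(z + 3/4) - ψ(z + 1/4) - 1/(2z)`. Since `ψ` is monotone on
`(0, ∞)` (log-convexity of `Γ`) and `ψ(x + 1) = ψ(x) + 1/x`, for `0 ≤ a ≤ 1` the increment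
`ψ(x + a + n) - ψ(x + n)` lies in `[0, 1/(x + n)]`, so telescoping the recurrence gives
`ψ(x + a) - ψ(x) = ∑ₖ (1/(x + k) - 1/(x + a + k))`. With `a = 1/2` and `a = 1` this expands `F'/F (z)`
as `∑ₖ φ(z + k)`, where `φ(b) = -(3/32) / ((b² + b)(b² + b + 3/16))` is negative and strictly
increasing on `(0, ∞)`; both claims then follow termwise.
-/

open Filter Topology

local notation "ψ" => logDeriv Gamma

lemma logDeriv_comp_add_const {𝕜 𝕜' : Type*} [NontriviallyNormedField 𝕜]
    [NontriviallyNormedField 𝕜'] [NormedAlgebra 𝕜 𝕜'] (f : 𝕜 → 𝕜') (a x : 𝕜) :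
    logDeriv (fun y => f (y + a)) x = logDeriv f (x + a) := by
  simp only [logDeriv_apply, deriv_comp_add_const]

lemma Real.logDeriv_sqrt {x : ℝ} (hx : 0 < x) : logDeriv sqrt x = (2 * x)⁻¹ := by
  rw [logDeriv_apply, (hasDerivAt_sqrt hx.ne').deriv, div_div, mul_assoc, mul_self_sqrt hx.le,
    one_div]

lemma Real.differentiableAt_Gamma_of_pos {x : ℝ} (hx : 0 < x) : DifferentiableAt ℝ Gamma x :=
  differentiableAt_Gamma fun m => ((neg_nonpos.2 m.cast_nonneg).trans_lt hx).ne'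

lemma Real.logDeriv_Gamma_add_one {x : ℝ} (hx : 0 < x) : ψ (x + 1) = ψ x + x⁻¹ := by
  have hshift : (fun y => Gamma (y + 1)) =ᶠ[𝓝 x] fun y => id y * Gamma y := by
    filter_upwards [eventually_gt_nhds hx] with y hy using Gamma_add_one hy.ne'
  rw [← logDeriv_comp_add_const, (logDeriv_congr_nhds hshift).self_of_nhds,
    logDeriv_mul (f := id) x hx.ne' (Gamma_pos_of_pos hx).ne' differentiableAt_id
      (differentiableAt_Gamma_of_pos hx), logDeriv_id, one_div, add_comm]

lemma Real.logDeriv_Gamma_add_nat {x : ℝ} (hx : 0 < x) (n : ℕ) :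
    ψ (x + n) = ψ x + ∑ k ∈ Finset.range n, (x + k)⁻¹ := by
  induction n with
  | zero => simp
  | succ n ih =>
    rw [Nat.cast_succ, ← add_assoc, logDeriv_Gamma_add_one (by positivity), ih,
      Finset.sum_range_succ, add_assoc]

lemma Real.monotoneOn_logDeriv_Gamma : MonotoneOn ψ (Ioi 0) := by
  intro x hx y hy hxy
  rw [← deriv_log_comp_eq_logDeriv (differentiableAt_Gamma_of_pos hx) (Gamma_pos_of_pos hx).ne',
    ← deriv_log_comp_eq_logDeriv (differentiableAt_Gamma_of_pos hy) (Gamma_pos_of_pos hy).ne']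
  refine convexOn_log_Gamma.monotoneOn_deriv (fun t ht => ?_) hx hy hxy
  exact (differentiableAt_Gamma_of_pos ht).log (Gamma_pos_of_pos ht).ne'

lemma Real.logDeriv_Gamma_add_sub_mem_Icc {x a : ℝ} (hx : 0 < x) (ha₀ : 0 ≤ a) (ha₁ : a ≤ 1) :
    ψ (x + a) - ψ x ∈ Icc 0 x⁻¹ := by
  have hmono := monotoneOn_logDeriv_Gamma
  have h₀ : ψ x ≤ ψ (x + a) :=
    hmono hx (show 0 < x + a by positivity) (by linarith)
  have h₁ : ψ (x + a) ≤ ψ (x + 1) :=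
    hmono (show 0 < x + a by positivity) (show 0 < x + 1 by positivity) (by linarith)
  rw [logDeriv_Gamma_add_one hx] at h₁
  constructor <;> linarith

lemma Real.hasSum_logDeriv_Gamma_add_sub {x a : ℝ} (hx : 0 < x) (ha₀ : 0 ≤ a) (ha₁ : a ≤ 1) :
    HasSum (fun k : ℕ => (x + k)⁻¹ - (x + a + k)⁻¹) (ψ (x + a) - ψ x) := by
  have hterm (k : ℕ) : 0 ≤ (x + k)⁻¹ - (x + a + k)⁻¹ :=
    sub_nonneg.2 (inv_anti₀ (by positivity) (by linarith))
  have hpartial (n : ℕ) : ∑ k ∈ Finset.range n, ((x + k)⁻¹ - (x + a + k)⁻¹) =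
      (ψ (x + a) - ψ x) - (ψ (x + n + a) - ψ (x + n)) := by
    rw [Finset.sum_sub_distrib, add_right_comm, logDeriv_Gamma_add_nat hx,
      logDeriv_Gamma_add_nat (by positivity : 0 < x + a)]
    ring
  have htail : Tendsto (fun n : ℕ => ψ (x + n + a) - ψ (x + n)) atTop (𝓝 0) := by
    refine squeeze_zero (fun n => ?_) (fun n => ?_)
      (tendsto_atTop_add_const_left _ x tendsto_natCast_atTop_atTop).inv_tendsto_atTop
    · exact (logDeriv_Gamma_add_sub_mem_Icc (by positivity) ha₀ ha₁).1
    · exact (logDeriv_Gamma_add_sub_mem_Icc (by positivity) ha₀ ha₁).2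
  rw [hasSum_iff_tendsto_nat_of_nonneg hterm]
  simp only [hpartial]
  simpa using htail.const_sub (ψ (x + a) - ψ x)

lemma logDeriv_F {z : ℝ} (hz : 0 < z) : logDeriv F z = ψ (z + 3/4) - ψ (z + 1/4) - (2 * z)⁻¹ := by
  have hΓ {c : ℝ} (hc : 0 ≤ c) : DifferentiableAt ℝ (fun y => Gamma (y + c)) z :=
    (differentiableAt_Gamma_of_pos (by positivity)).comp z (differentiableAt_id.add_const c)
  have hsqrt : DifferentiableAt ℝ sqrt z := differentiableAt_id.sqrt hz.ne'
  unfold F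
  rw [logDeriv_div (f := fun y => Gamma (y + 3/4)) (g := fun y => Gamma (y + 1/4) * sqrt y) z
      (by positivity) (by positivity) (hΓ (by norm_num)) ((hΓ (by norm_num)).mul hsqrt),
    logDeriv_mul (f := fun y => Gamma (y + 1/4)) (g := sqrt) z (by positivity) (by positivity)
      (hΓ (by norm_num)) hsqrt,
    logDeriv_comp_add_const, logDeriv_comp_add_const, logDeriv_sqrt hz, sub_add_eq_sub_sub]

noncomputable def gammaRatioTerm (b : ℝ) : ℝ :=
  -(3/32) / ((b ^ 2 + b) * (b ^ 2 + b + 3/16))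

lemma inv_sub_inv_sub_half_eq_gammaRatioTerm {b : ℝ} (hb : 0 < b) :
    (b + 1/4)⁻¹ - (b + 3/4)⁻¹ - (b⁻¹ - (b + 1)⁻¹) / 2 = gammaRatioTerm b := by
  unfold gammaRatioTerm
  field_simp
  ring

lemma gammaRatioTerm_neg {b : ℝ} (hb : 0 < b) : gammaRatioTerm b < 0 :=
  div_neg_of_neg_of_pos (by norm_num) (by positivity)

lemma strictMonoOn_gammaRatioTerm : StrictMonoOn gammaRatioTerm (Ioi 0) := by
  intro a (ha : 0 < a) b (hb : 0 < b) hab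
  have hsq : a ^ 2 + a < b ^ 2 + b := by nlinarith
  unfold gammaRatioTerm
  rw [neg_div, neg_div, neg_lt_neg_iff]
  refine div_lt_div_of_pos_left (by norm_num) (by positivity) ?_
  nlinarith [mul_pos (sub_pos.2 hsq) (show 0 < b ^ 2 + b + (a ^ 2 + a) + 3/16 by positivity)]

lemma hasSum_gammaRatioTerm {z : ℝ} (hz : 0 < z) :
    HasSum (fun k : ℕ => gammaRatioTerm (z + k)) (logDeriv F z) := by
  have hhalf := hasSum_logDeriv_Gamma_add_sub (x := z + 1/4) (a := 1/2) (by positivity)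
    (by norm_num) (by norm_num)
  have hinv := hasSum_logDeriv_Gamma_add_sub hz zero_le_one le_rfl
  rw [logDeriv_Gamma_add_one hz, add_sub_cancel_left] at hinv
  have hval : ψ (z + 1/4 + 1/2) - ψ (z + 1/4) - z⁻¹ / 2 = logDeriv F z := by
    rw [logDeriv_F hz]
    ring_nf
  have hterm : (fun k : ℕ => gammaRatioTerm (z + k)) =
      fun k : ℕ => (z + 1/4 + k)⁻¹ - (z + 1/4 + 1/2 + k)⁻¹ - ((z + k)⁻¹ - (z + 1 + k)⁻¹) / 2 := by
    funext k
    rw [← inv_sub_inv_sub_half_eq_gammaRatioTerm (by positivity)]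
    ring_nf
  rw [hterm, ← hval]
  exact hhalf.sub (hinv.div_const 2)

/-- The function `z ↦ F'(z)/F(z)` is negative and strictly increasing
on `(0,∞)`: for all `0 < z₁ < z₂`, `F'(z₁)/F(z₁) < F'(z₂)/F(z₂) < 0`. -/
theorem stmt13 :
    ∀ z₁ z₂ : ℝ, 0 < z₁ → z₁ < z₂ →
      deriv F z₁ / F z₁ < deriv F z₂ / F z₂ ∧ deriv F z₂ / F z₂ < 0 := by
  intro z₁ z₂ hz₁ hz₁₂
  have hz₂ : 0 < z₂ := hz₁.trans hz₁₂
  simp only [← logDeriv_apply]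
  have hs₁ := hasSum_gammaRatioTerm hz₁
  have hs₂ := hasSum_gammaRatioTerm hz₂
  have hlt (k : ℕ) : gammaRatioTerm (z₁ + k) < gammaRatioTerm (z₂ + k) :=
    strictMonoOn_gammaRatioTerm (show 0 < z₁ + k by positivity) (show 0 < z₂ + k by positivity)
      (by linarith)
  exact ⟨hasSum_lt (fun k => (hlt k).le) (hlt 0) hs₁ hs₂,
    hasSum_lt (fun k => (gammaRatioTerm_neg (by positivity)).le)
      (i := 0) (gammaRatioTerm_neg (by simpa using hz₂)) hs₂ hasSum_zero⟩
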